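/- Node classifiers computed by 0/1-GNNs are closed under conjunction, disjunction, and negation: if c1 and c2 are node classifiers each computable by some 0/1-GNN, then ¬c1, c1 ∧ c2, and c1 ∨ c2 are also computable by 0/1-GNNs. -/

import Mathlib

inductive Var : Type
  | x | y
deriving DecidableEq

structure GNNGraph (P1 P2 : Type) where
  V : Type
  [fintV : Fintype V]
  [decV : DecidableEq V]
  unary : P1 → V → Prop
  rel : P2 → V → V → Prop
  [decU : ∀ p, DecidablePred (unary p)]
  [decR : ∀ r, DecidableRel (rel r)]

attribute [instance] GNNGraph.fintV GNNGraph.decV GNNGraph.decU GNNGraph.decR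

/-- Clamp function `f(t) = max(0, min(t,1))`. -/
def f01 (t : ℤ) : ℤ := max 0 (min t 1)

/-- A 0/1-GNN: integer matrices for combination, per-relation aggregation and global
readout, plus integer biases; input dimension `|P1|`, output dimension `1`. -/
structure ZOGNN (P1 P2 : Type) [Fintype P1] [Fintype P2] where
  L : ℕ
  dim : ℕ → ℕ
  dim0 : dim 0 = Fintype.card P1
  dimL : dim L = 1
  C : (i : ℕ) → Matrix (Fin (dim (i + 1))) (Fin (dim i)) ℤ
  A : P2 → (i : ℕ) → Matrix (Fin (dim (i + 1))) (Fin (dim i)) ℤ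
  R : (i : ℕ) → Matrix (Fin (dim (i + 1))) (Fin (dim i)) ℤ
  b : (i : ℕ) → Fin (dim (i + 1)) → ℤ

variable {P1 P2 : Type} [Fintype P1] [Fintype P2]

/-- Feature computation of a 0/1-GNN on a graph: one-hot initialization from the unary
predicates, then clamped integer-affine message passing with global readout. -/
noncomputable def ZOGNN.feat (N : ZOGNN P1 P2) (G : GNNGraph P1 P2) : (i : ℕ) → G.V → (Fin (N.dim i) → ℤ)
  | 0, v => fun j =>
      if G.unary ((Fintype.equivFin P1).symm (Fin.cast N.dim0 j)) v then 1 else 0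
  | i + 1, v => fun j =>
      f01 ((N.C i).mulVec (N.feat G i v) j
        + ∑ r : P2, ∑ u ∈ Finset.univ.filter (fun u => G.rel r v u),
            (N.A r i).mulVec (N.feat G i u) j
        + (N.R i).mulVec (∑ u : G.V, N.feat G i u) j
        + N.b i j)

/-- The node classifier computed by a 0/1-GNN: output `1` in the final 1-dimensional
feature means `true`. -/
def ZOGNN.Computes (N : ZOGNN P1 P2) (c : (G : GNNGraph P1 P2) → G.V → Prop) : Prop :=
  ∀ (G : GNNGraph P1 P2) (v : G.V),
    c G v ↔ N.feat G N.L v (Fin.cast N.dimL.symm (0 : Fin 1)) = 1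

/-!
Two networks can run side by side on concatenated feature vectors: with block-diagonal weights
(both blocks reading the shared input at layer 0), each layer of the combined network reproduces
the layers of both networks on its two blocks, because aggregation and global readout are linear.
One more layer then outputs `f01 (a1 x1 + a2 x2 + β)` from the two output bits; `f01 (1 - x1)`,
`f01 (x1 + x2 - 1)` and `f01 (x1 + x2)` give negation, conjunction and disjunction. Networks of
different depth are first brought to the same depth by appending layers `f01 x`, which fix the
output bits.
-/

open Matrix

lemma f01_eq_zero_or_one (t : ℤ) : f01 t = 0 ∨ f01 t = 1 := by
  unfold f01
  omega

lemma Function.Injective.extend_zero_dotProduct {m n α : Type*} [Fintype m] [Fintype n]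
    [NonUnitalNonAssocSemiring α] {e : m → n} (he : Function.Injective e) (g : m → α)
    (x : n → α) : Function.extend e g 0 ⬝ᵥ x = g ⬝ᵥ (x ∘ e) := by
  refine (Fintype.sum_of_injective e he _ _ (fun k hk => ?_) fun k => ?_).symm
  · rw [Function.extend_apply' _ _ _ (by simpa using hk), Pi.zero_apply, zero_mul]
  · rw [he.extend_apply, Function.comp_apply]

namespace ZOGNN

variable {N : ZOGNN P1 P2} {c : (G : GNNGraph P1 P2) → G.V → Prop}

lemma feat_eq_zero_or_one (N : ZOGNN P1 P2) (G : GNNGraph P1 P2) :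
    ∀ i v j, N.feat G i v j = 0 ∨ N.feat G i v j = 1
  | 0, v, j => by simp only [feat]; split <;> simp
  | _ + 1, _, _ => f01_eq_zero_or_one _

lemma feat_zero_congr (M N : ZOGNN P1 P2) (G : GNNGraph P1 P2) (v : G.V) {k : Fin (M.dim 0)}
    {j : Fin (N.dim 0)} (h : k.val = j.val) : M.feat G 0 v k = N.feat G 0 v j := by
  have hcast : Fin.cast M.dim0 k = Fin.cast N.dim0 j := Fin.ext h
  simp only [feat, hcast]

noncomputable def output (N : ZOGNN P1 P2) (G : GNNGraph P1 P2) (v : G.V) : ℤ :=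
  N.feat G N.L v (Fin.cast N.dimL.symm 0)

open scoped Classical in
lemma Computes.output_eq (h : N.Computes c) (G : GNNGraph P1 P2) (v : G.V) :
    N.output G v = if c G v then 1 else 0 := by
  have h01 := N.feat_eq_zero_or_one G N.L v (Fin.cast N.dimL.symm 0)
  have hc := h G v
  unfold output
  split_ifs <;> simp_all

lemma const_dotProduct_feat (N : ZOGNN P1 P2) (G : GNNGraph P1 P2) (v : G.V) {i : ℕ}
    (h : N.L = i) (a : ℤ) : (fun _ => a) ⬝ᵥ N.feat G i v = a * N.output G v := by
  subst h
  have : Subsingleton (Fin (N.dim N.L)) := by rw [N.dimL]; infer_instance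
  rw [dotProduct, Fintype.sum_subsingleton _ (Fin.cast N.dimL.symm 0), output]

/-- `e i` places layer `i` of `N` inside layer `i` of `M`, compatibly with the weights of the
first `n` layers. -/
structure Embeds (M N : ZOGNN P1 P2) (n : ℕ) (e : ∀ i ≤ n, Fin (N.dim i) → Fin (M.dim i)) :
    Prop where
  feat_zero : ∀ G v j, M.feat G 0 v (e 0 n.zero_le j) = N.feat G 0 v j
  C : ∀ i (hi : i < n) x j, (M.C i *ᵥ x) (e (i + 1) hi j) = (N.C i *ᵥ (x ∘ e i hi.le)) j
  A : ∀ r i (hi : i < n) x j,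
    (M.A r i *ᵥ x) (e (i + 1) hi j) = (N.A r i *ᵥ (x ∘ e i hi.le)) j
  R : ∀ i (hi : i < n) x j, (M.R i *ᵥ x) (e (i + 1) hi j) = (N.R i *ᵥ (x ∘ e i hi.le)) j
  b : ∀ i (hi : i < n) j, M.b i (e (i + 1) hi j) = N.b i j

theorem Embeds.feat_comp {M : ZOGNN P1 P2} {n : ℕ}
    {e : ∀ i ≤ n, Fin (N.dim i) → Fin (M.dim i)} (h : M.Embeds N n e) (G : GNNGraph P1 P2) :
    ∀ i (hi : i ≤ n) v, M.feat G i v ∘ e i hi = N.feat G i v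
  | 0, _, v => funext (h.feat_zero G v)
  | i + 1, hi, v => by
    have ih : ∀ u, M.feat G i u ∘ e i (i.le_succ.trans hi) = N.feat G i u :=
      h.feat_comp G i _
    have hsum : (∑ u, M.feat G i u) ∘ e i (i.le_succ.trans hi) = ∑ u, N.feat G i u := by
      funext k
      simp only [Function.comp_apply, Finset.sum_apply, ← ih]
    funext j
    simp only [Function.comp_apply, feat, h.C, h.A, h.R, h.b, ih, hsum]

section Combine

variable (N1 N2 : ZOGNN P1 P2)

/-- Layer widths of the parallel composition: both networks read the common input layer. -/
def parDim (i : ℕ) : ℕ :=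
  if i = 0 then Fintype.card P1 else if i ≤ N1.L then N1.dim i + N2.dim i else 1

lemma parDim_of_ne_zero {i : ℕ} (h0 : i ≠ 0) (hi : i ≤ N1.L) :
    N1.parDim N2 i = N1.dim i + N2.dim i := by
  simp [parDim, h0, hi]

def inl (i : ℕ) (hi : i ≤ N1.L) : Fin (N1.dim i) → Fin (N1.parDim N2 i) :=
  if h0 : i = 0 then Fin.cast (by subst h0; simp [parDim, N1.dim0])
  else fun j => Fin.cast (N1.parDim_of_ne_zero N2 h0 hi).symm (Fin.castAdd _ j)

def inr (i : ℕ) (hi : i ≤ N1.L) : Fin (N2.dim i) → Fin (N1.parDim N2 i) :=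
  if h0 : i = 0 then Fin.cast (by subst h0; simp [parDim, N2.dim0])
  else fun j => Fin.cast (N1.parDim_of_ne_zero N2 h0 hi).symm (Fin.natAdd _ j)

variable {N1 N2}

lemma inl_injective (i : ℕ) (hi : i ≤ N1.L) : Function.Injective (N1.inl N2 i hi) := by
  unfold inl
  split_ifs
  exacts [Fin.cast_injective _, (Fin.cast_injective _).comp (Fin.castAdd_injective _ _)]

lemma inr_injective (i : ℕ) (hi : i ≤ N1.L) : Function.Injective (N1.inr N2 i hi) := by
  unfold inr
  split_ifs
  exacts [Fin.cast_injective _, (Fin.cast_injective _).comp (Fin.natAdd_injective _ _)]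

def parVec {α : Type*} {i : ℕ} (hi : i < N1.L) (x1 : Fin (N1.dim (i + 1)) → α)
    (x2 : Fin (N2.dim (i + 1)) → α) : Fin (N1.parDim N2 (i + 1)) → α :=
  fun k => Fin.addCases (motive := fun _ => α) x1 x2
    (Fin.cast (N1.parDim_of_ne_zero N2 i.succ_ne_zero hi) k)

@[simp]
lemma parVec_inl {α : Type*} {i : ℕ} (hi : i < N1.L) (x1 : Fin (N1.dim (i + 1)) → α)
    (x2 : Fin (N2.dim (i + 1)) → α) (j : Fin (N1.dim (i + 1))) :
    parVec hi x1 x2 (N1.inl N2 (i + 1) hi j) = x1 j := by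
  simp [parVec, inl]

@[simp]
lemma parVec_inr {α : Type*} {i : ℕ} (hi : i < N1.L) (x1 : Fin (N1.dim (i + 1)) → α)
    (x2 : Fin (N2.dim (i + 1)) → α) (j : Fin (N2.dim (i + 1))) :
    parVec hi x1 x2 (N1.inr N2 (i + 1) hi j) = x2 j := by
  simp [parVec, inr]

/-- The rows of `X` act on the `N1`-block, those of `Y` on the `N2`-block (at layer 0 both
blocks are the whole input). -/
noncomputable def parLayer {i : ℕ} (hi : i < N1.L)
    (X : Matrix (Fin (N1.dim (i + 1))) (Fin (N1.dim i)) ℤ)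
    (Y : Matrix (Fin (N2.dim (i + 1))) (Fin (N2.dim i)) ℤ) :
    Matrix (Fin (N1.parDim N2 (i + 1))) (Fin (N1.parDim N2 i)) ℤ :=
  Matrix.of <| parVec hi (fun j => Function.extend (N1.inl N2 i hi.le) (X j) 0)
    (fun j => Function.extend (N1.inr N2 i hi.le) (Y j) 0)

lemma parLayer_mulVec_inl {i : ℕ} (hi : i < N1.L)
    (X : Matrix (Fin (N1.dim (i + 1))) (Fin (N1.dim i)) ℤ)
    (Y : Matrix (Fin (N2.dim (i + 1))) (Fin (N2.dim i)) ℤ) (x : Fin (N1.parDim N2 i) → ℤ)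
    (j : Fin (N1.dim (i + 1))) :
    (parLayer hi X Y *ᵥ x) (N1.inl N2 (i + 1) hi j) = (X *ᵥ (x ∘ N1.inl N2 i hi.le)) j := by
  simp only [parLayer, mulVec, of_apply, parVec_inl]
  exact (inl_injective i hi.le).extend_zero_dotProduct _ _

lemma parLayer_mulVec_inr {i : ℕ} (hi : i < N1.L)
    (X : Matrix (Fin (N1.dim (i + 1))) (Fin (N1.dim i)) ℤ)
    (Y : Matrix (Fin (N2.dim (i + 1))) (Fin (N2.dim i)) ℤ) (x : Fin (N1.parDim N2 i) → ℤ)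
    (j : Fin (N2.dim (i + 1))) :
    (parLayer hi X Y *ᵥ x) (N1.inr N2 (i + 1) hi j) = (Y *ᵥ (x ∘ N1.inr N2 i hi.le)) j := by
  simp only [parLayer, mulVec, of_apply, parVec_inr]
  exact (inr_injective i hi.le).extend_zero_dotProduct _ _

variable (N1 N2)

/-- `N1` and `N2` run side by side, followed by one layer computing `f01 (a1 x1 + a2 x2 + β)`
from their outputs `x1`, `x2`. -/
noncomputable abbrev combine (a1 a2 β : ℤ) : ZOGNN P1 P2 where
  L := N1.L + 1
  dim := N1.parDim N2
  dim0 := by simp [parDim]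
  dimL := by simp [parDim]
  C i := if hi : i < N1.L then parLayer hi (N1.C i) (N2.C i)
    else if hL : i = N1.L then replicateRow _ <|
      Function.extend (N1.inl N2 i hL.le) (fun _ => a1) 0 +
        Function.extend (N1.inr N2 i hL.le) (fun _ => a2) 0
    else 0
  A r i := if hi : i < N1.L then parLayer hi (N1.A r i) (N2.A r i) else 0
  R i := if hi : i < N1.L then parLayer hi (N1.R i) (N2.R i) else 0
  b i := if hi : i < N1.L then parVec hi (N1.b i) (N2.b i) else fun _ => β

variable {N1 N2} {a1 a2 β : ℤ}

lemma embeds_inl : (N1.combine N2 a1 a2 β).Embeds N1 N1.L (N1.inl N2) where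
  feat_zero G v _ := feat_zero_congr _ _ G v (by simp [inl])
  C i hi x j := by simp only [dif_pos hi, parLayer_mulVec_inl]
  A r i hi x j := by simp only [dif_pos hi, parLayer_mulVec_inl]
  R i hi x j := by simp only [dif_pos hi, parLayer_mulVec_inl]
  b i hi j := by simp only [dif_pos hi, parVec_inl]

lemma embeds_inr : (N1.combine N2 a1 a2 β).Embeds N2 N1.L (N1.inr N2) where
  feat_zero G v _ := feat_zero_congr _ _ G v (by simp [inr])
  C i hi x j := by simp only [dif_pos hi, parLayer_mulVec_inr]
  A r i hi x j := by simp only [dif_pos hi, parLayer_mulVec_inr]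
  R i hi x j := by simp only [dif_pos hi, parLayer_mulVec_inr]
  b i hi j := by simp only [dif_pos hi, parVec_inr]

lemma combine_output (hL : N2.L = N1.L) (G : GNNGraph P1 P2) (v : G.V) :
    (N1.combine N2 a1 a2 β).output G v = f01 (a1 * N1.output G v + a2 * N2.output G v + β) := by
  have hrow : (Function.extend (N1.inl N2 N1.L le_rfl) (fun _ => a1) 0 +
      Function.extend (N1.inr N2 N1.L le_rfl) (fun _ => a2) 0) ⬝ᵥ
        (N1.combine N2 a1 a2 β).feat G N1.L v = a1 * N1.output G v + a2 * N2.output G v := by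
    rw [add_dotProduct, (inl_injective _ _).extend_zero_dotProduct,
      (inr_injective _ _).extend_zero_dotProduct, embeds_inl.feat_comp, embeds_inr.feat_comp,
      const_dotProduct_feat _ _ _ rfl, const_dotProduct_feat _ _ _ hL]
  show (N1.combine N2 a1 a2 β).feat G (N1.L + 1) v _ = _
  simp only [feat, lt_irrefl, not_false_eq_true, dif_neg, dif_pos, replicateRow_mulVec_eq_const,
    Function.const_apply, hrow, zero_mulVec, Pi.zero_apply, Finset.sum_const_zero, add_zero]

end Combine

open scoped Classical in
theorem Computes.combine {N1 N2 : ZOGNN P1 P2} {c1 c2 : (G : GNNGraph P1 P2) → G.V → Prop}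
    (h1 : N1.Computes c1) (h2 : N2.Computes c2) (hL : N2.L = N1.L) {a1 a2 β : ℤ}
    (hc : ∀ G v, c G v ↔
      f01 (a1 * (if c1 G v then 1 else 0) + a2 * (if c2 G v then 1 else 0) + β) = 1) :
    (N1.combine N2 a1 a2 β).Computes c := fun G v => by
  rw [hc, ← h1.output_eq, ← h2.output_eq, ← combine_output hL]
  rfl

theorem Computes.exists_L_eq (h : N.Computes c) {n : ℕ} (hn : N.L ≤ n) :
    ∃ M : ZOGNN P1 P2, M.L = n ∧ M.Computes c := by
  induction n, hn using Nat.le_induction with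
  | base => exact ⟨N, rfl, h⟩
  | succ n _ ih =>
    obtain ⟨M, hM, hMc⟩ := ih
    exact ⟨M.combine M 1 0 0, congrArg (· + 1) hM,
      hMc.combine hMc rfl fun G v => by by_cases c G v <;> simp [*, f01]⟩

end ZOGNN

/-- Node classifiers computed by 0/1-GNNs are closed under negation, conjunction and
disjunction. -/
theorem stmt9 (c1 c2 : (G : GNNGraph P1 P2) → G.V → Prop) (N1 N2 : ZOGNN P1 P2)
    (h1 : N1.Computes c1) (h2 : N2.Computes c2) :
    (∃ N : ZOGNN P1 P2, N.Computes (fun G v => ¬ c1 G v)) ∧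
    (∃ N : ZOGNN P1 P2, N.Computes (fun G v => c1 G v ∧ c2 G v)) ∧
    (∃ N : ZOGNN P1 P2, N.Computes (fun G v => c1 G v ∨ c2 G v)) := by
  obtain ⟨M1, hM1L, hM1⟩ := h1.exists_L_eq (le_max_left N1.L N2.L)
  obtain ⟨M2, hM2L, hM2⟩ := h2.exists_L_eq (le_max_right N1.L N2.L)
  have hL : M2.L = M1.L := hM2L.trans hM1L.symm
  refine ⟨⟨_, h1.combine h1 rfl (a1 := -1) (a2 := 0) (β := 1) ?_⟩,
    ⟨_, hM1.combine hM2 hL (a1 := 1) (a2 := 1) (β := -1) ?_⟩,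
    ⟨_, hM1.combine hM2 hL (a1 := 1) (a2 := 1) (β := 0) ?_⟩⟩ <;>
  intro G v <;> by_cases c1 G v <;> by_cases c2 G v <;> simp [*, f01]
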